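/- arXiv:2107.03091 — 4 statements merged into one kernel-verified Lean document; each statement's English description precedes it below -/
import Mathlib

section
/- Let λ > 0 and c be real constants with λc + 1 ≠ 0, and let k₁, k₂, k₃, k₄ be real constants. Define x(t) = -(λ/(λc+1))·(k₁e^{t(λc+1)} + k₂e^{-t(λc+1)}) + k₃ and y(t) = (1/(λc+1))·(k₁e^{t(λc+1)} - k₂e^{-t(λc+1)}) + k₄. Then for all t, y''(t) + x'(t)·(c + 1/λ) = 0 and x''(t) + y'(t)·λ·(λc + 1) = 0. -/
open Real

noncomputable def expCombination (a p q r t : ℝ) : ℝ :=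
  p * exp (t * a) + q * exp (-(t * a)) + r

theorem hasDerivAt_expCombination (a p q r t : ℝ) :
    HasDerivAt (expCombination a p q r) (expCombination a (a * p) (-a * q) 0 t) t := by
  have hlin : HasDerivAt (fun t : ℝ => t * a) a t := by
    simpa using (hasDerivAt_id t).mul_const a
  have h : HasDerivAt (expCombination a p q r)
      (p * (exp (t * a) * a) + q * (exp (-(t * a)) * -a)) t :=
    ((hlin.exp.const_mul p).add (hlin.neg.exp.const_mul q)).add_const r
  refine h.congr_deriv ?_
  rw [expCombination]
  ring

theorem deriv_expCombination (a p q r : ℝ) :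
    deriv (expCombination a p q r) = expCombination a (a * p) (-a * q) 0 :=
  funext fun t => (hasDerivAt_expCombination a p q r t).deriv

theorem stmt_0_general (lam c k1 k2 k3 k4 : ℝ) (hlam : 0 < lam)
    (x y : ℝ → ℝ)
    (hx : ∀ t, x t = -(lam / (lam * c + 1)) *
      (k1 * Real.exp (t * (lam * c + 1)) + k2 * Real.exp (-(t * (lam * c + 1)))) + k3)
    (hy : ∀ t, y t = (1 / (lam * c + 1)) *
      (k1 * Real.exp (t * (lam * c + 1)) - k2 * Real.exp (-(t * (lam * c + 1)))) + k4) :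
    ∀ t, deriv (deriv y) t + deriv x t * (c + 1 / lam) = 0 ∧
      deriv (deriv x) t + deriv y t * (lam * (lam * c + 1)) = 0 := by
  set a := lam * c + 1
  have hx' : x = expCombination a (-(lam / a) * k1) (-(lam / a) * k2) k3 := by
    funext t; rw [hx, expCombination]; ring
  have hy' : y = expCombination a (1 / a * k1) (-(1 / a) * k2) k4 := by
    funext t; rw [hy, expCombination]; ring
  have hfactor : lam * (c + 1 / lam) = a := by
    rw [mul_add, mul_one_div_cancel hlam.ne']
  intro t
  simp only [hx', hy', deriv_expCombination, expCombination]
  constructor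
  · linear_combination (-(a / a) * (k1 * exp (t * a) - k2 * exp (-(t * a)))) * hfactor
  · ring

theorem stmt_0 (lam c k1 k2 k3 k4 : ℝ) (hlam : 0 < lam) (hc : lam * c + 1 ≠ 0)
    (x y : ℝ → ℝ)
    (hx : ∀ t, x t = -(lam / (lam * c + 1)) *
      (k1 * Real.exp (t * (lam * c + 1)) + k2 * Real.exp (-(t * (lam * c + 1)))) + k3)
    (hy : ∀ t, y t = (1 / (lam * c + 1)) *
      (k1 * Real.exp (t * (lam * c + 1)) - k2 * Real.exp (-(t * (lam * c + 1)))) + k4) :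
    ∀ t, deriv (deriv y) t + deriv x t * (c + 1 / lam) = 0 ∧
      deriv (deriv x) t + deriv y t * (lam * (lam * c + 1)) = 0 :=
  stmt_0_general lam c k1 k2 k3 k4 hlam x y hx hy
end

section
/- Let λ > 0 and let x, y, z : ℝ → ℝ be smooth with z' + x·y' = x/λ (i.e., the constant c = 0 case). If additionally y'' = -x'·(2x/λ) and (λy' - 1)·(x/λ) = -x·y' - x''/λ hold, then y' = -x²/λ and x satisfies the nonlinear ODE x'' - 2x³ - x = 0, provided y'(0) = -x(0)²/λ. -/
theorem stmt_4 (lam : ℝ) (hlam : 0 < lam) (x y z : ℝ → ℝ)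
    (hx : ContDiff ℝ (⊤ : ℕ∞) x) (hy : ContDiff ℝ (⊤ : ℕ∞) y) (hz : ContDiff ℝ (⊤ : ℕ∞) z)
    (hzc : ∀ t, deriv z t + x t * deriv y t = x t / lam)
    (h1 : ∀ t, deriv (deriv y) t = -deriv x t * (2 * x t / lam))
    (h2 : ∀ t, (lam * deriv y t - 1) * (x t / lam) = -x t * deriv y t - deriv (deriv x) t / lam)
    (h0 : deriv y 0 = -(x 0) ^ 2 / lam) :
    (∀ t, deriv y t = -(x t) ^ 2 / lam) ∧
      (∀ t, deriv (deriv x) t - 2 * (x t) ^ 3 - x t = 0) := by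
  have hy2 : ContDiff ℝ (↑(⊤ : ℕ∞)) y := hy.of_le (by simp)
  have hdydiff : Differentiable ℝ (deriv y) :=
    (contDiff_infty_iff_deriv.mp hy2).2.differentiable (by simp)
  have hxd : Differentiable ℝ x := hx.differentiable (by simp)
  have key : ∀ t, deriv y t = -(x t) ^ 2 / lam := by
    have hg : ∀ t, deriv (fun t => deriv y t + (x t) ^ 2 / lam) t = 0 := by
      intro t
      have h1' := h1 t
      have hd1 : HasDerivAt (deriv y) (deriv (deriv y) t) t :=
        (hdydiff t).hasDerivAt
      have hd2 : HasDerivAt (fun t => (x t) ^ 2 / lam)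
          (2 * x t * deriv x t / lam) t := by
        have := ((hxd t).hasDerivAt.pow 2).div_const lam
        simpa [mul_comm, mul_assoc, mul_left_comm] using this
      have := (hd1.add hd2).deriv
      rw [show (fun t => deriv y t + x t ^ 2 / lam) = (deriv y + fun t => x t ^ 2 / lam) from rfl, this, h1']
      field_simp
      ring
    have hconst : ∀ t, (fun t => deriv y t + (x t) ^ 2 / lam) t
        = (fun t => deriv y t + (x t) ^ 2 / lam) 0 := by
      intro t
      apply is_const_of_deriv_eq_zero _ hg
      exact hdydiff.add ((hxd.pow 2).div_const lam)
    intro t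
    have := hconst t
    simp only [h0] at this
    have hl := hlam.ne'
    field_simp at this ⊢
    linarith
  refine ⟨key, fun t => ?_⟩
  have h2' := h2 t
  rw [key t] at h2'
  have hl : lam ≠ 0 := hlam.ne'
  field_simp at h2'
  have h3 : lam ^ 2 * (deriv (deriv x) t - 2 * x t ^ 3 - x t) = 0 := by
    linear_combination lam ^ 2 * h2'
  rcases mul_eq_zero.mp h3 with h | h
  · exact absurd h (pow_ne_zero 2 hl)
  · exact h
end

section
/- Let λ > 0 and c ∈ ℝ with λc - 1 ≠ 0, and let k₁, k₂, k₃, k₄ ∈ ℝ. Define ω = λc - 1, x(t) = (λ/ω)·(k₁cos(ωt) + k₂sin(ωt)) + k₃, and y(t) = (1/ω)·(k₁sin(ωt) - k₂cos(ωt)) + k₄. Then for all t, y''(t) - x'(t)·(c - 1/λ) = 0 and x''(t) + y'(t)·λ·(λc - 1) = 0. -/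
lemma trig_hd (a b k w : ℝ) (t : ℝ) :
    HasDerivAt (fun t => a * Real.cos (w * t) + b * Real.sin (w * t) + k)
      (a * (-Real.sin (w * t) * w) + b * (Real.cos (w * t) * w)) t := by
  have h0 : HasDerivAt (fun t : ℝ => w * t) w t := by
    simpa using (hasDerivAt_id t).const_mul w
  exact ((((Real.hasDerivAt_cos (w * t)).comp t h0).const_mul a).add
    (((Real.hasDerivAt_sin (w * t)).comp t h0).const_mul b)).add_const k

lemma trig_deriv (a b k w : ℝ) :
    deriv (fun t => a * Real.cos (w * t) + b * Real.sin (w * t) + k)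
      = fun t => (b * w) * Real.cos (w * t) + (-(a * w)) * Real.sin (w * t) + 0 := by
  funext t
  have := (trig_hd a b k w t).deriv
  rw [this]; ring

theorem stmt_7 (lam c k1 k2 k3 k4 : ℝ) (hlam : 0 < lam) (hc : lam * c - 1 ≠ 0)
    (x y : ℝ → ℝ)
    (hx : ∀ t, x t = (lam / (lam * c - 1)) *
      (k1 * Real.cos ((lam * c - 1) * t) + k2 * Real.sin ((lam * c - 1) * t)) + k3)
    (hy : ∀ t, y t = (1 / (lam * c - 1)) *
      (k1 * Real.sin ((lam * c - 1) * t) - k2 * Real.cos ((lam * c - 1) * t)) + k4) :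
    ∀ t, deriv (deriv y) t - deriv x t * (c - 1 / lam) = 0 ∧
      deriv (deriv x) t + deriv y t * (lam * (lam * c - 1)) = 0 := by
  set w := lam * c - 1 with hw
  have hxf : x = fun t => (lam / w * k1) * Real.cos (w * t) + (lam / w * k2) * Real.sin (w * t) + k3 := by
    funext t; rw [hx t]; ring
  have hyf : y = fun t => (-(1 / w * k2)) * Real.cos (w * t) + (1 / w * k1) * Real.sin (w * t) + k4 := by
    funext t; rw [hy t]; ring
  have hdx := trig_deriv (lam / w * k1) (lam / w * k2) k3 w
  have hdy := trig_deriv (-(1 / w * k2)) (1 / w * k1) k4 w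
  have hddx := trig_deriv (1 / w * k1 * w) (-(lam / w * k1 * w)) 0 w
  have hddy := trig_deriv (1 / w * k1 * w) ((1 / w * k2 * w)) 0 w
  intro t
  rw [hxf, hyf, hdx, hdy]
  rw [trig_deriv, trig_deriv]
  constructor <;> · simp only []; field_simp; ring
end

section
/- Define x(t) = 2cos(2t), y(t) = -2sin(2t), and z(t) = 4t + sin(4t) + c₁ for a constant c₁, and set λ = 1, c = 2. Then x² + y² = 4 identically, and z'(t) + x(t)·y'(t) = -x(t)²/2 - y(t)²/2 + 2 for all t. -/
open Real

theorem hasDerivAt_sin_const_mul (a t : ℝ) :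
    HasDerivAt (fun s => sin (a * s)) (a * cos (a * t)) t := by
  simpa [mul_comm] using ((hasDerivAt_id t).const_mul a).sin

theorem stmt_12 (c1 : ℝ) (x y z : ℝ → ℝ)
    (hx : ∀ t, x t = 2 * Real.cos (2 * t))
    (hy : ∀ t, y t = -2 * Real.sin (2 * t))
    (hz : ∀ t, z t = 4 * t + Real.sin (4 * t) + c1) :
    ∀ t, (x t) ^ 2 + (y t) ^ 2 = 4 ∧
      deriv z t + x t * deriv y t = -(x t) ^ 2 / 2 - (y t) ^ 2 / 2 + 2 := by
  intro t
  have hcircle : x t ^ 2 + y t ^ 2 = 4 := by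
    rw [hx, hy]
    linear_combination 4 * sin_sq_add_cos_sq (2 * t)
  have hy' : deriv y t = -4 * cos (2 * t) := by
    rw [funext hy]
    exact ((hasDerivAt_sin_const_mul 2 t).const_mul (-2)).deriv.trans (by ring)
  have hz' : deriv z t = 4 + 4 * cos (4 * t) := by
    rw [funext hz]
    exact (((hasDerivAt_id t).const_mul 4).add (hasDerivAt_sin_const_mul 4 t)
      |>.add_const c1).deriv.trans (by ring)
  have hcos4 : cos (4 * t) = 2 * cos (2 * t) ^ 2 - 1 := by
    rw [← cos_two_mul]; ring_nf
  refine ⟨hcircle, ?_⟩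
  rw [hy', hz', hcos4]
  -- both sides vanish: the left by the double-angle formula, the right on the circle of radius 2
  linear_combination (1 / 2) * hcircle - 4 * cos (2 * t) * hx t
end
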